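/- arXiv:2304.04243 — 4 statements merged into one kernel-verified Lean document; each statement's English description precedes it below -/
import Mathlib

section
/- Let a ∈ ℝ, let ω : ℝ → ℝ be measurable with ∫_{(−∞,a)} ω(t)² dt < ∞, and let g : ℝ → [0,∞) be measurable with ∫_{(−∞,a)} (a−t)·g(t) dt < ∞. Define ψ(x) := −∫_x^a ω(t) dt for x ≤ a. Then ∫_{(−∞,a)} g(x)·ψ(x)² dx ≤ (∫_{(−∞,a)} ω(t)² dt) · (∫_{(−∞,a)} (a−t)·g(t) dt); in particular ψ is square-integrable on (−∞,a) with respect to the weighted measure g(x) dx. -/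
/-!
By Cauchy–Schwarz, `ψ x ^ 2 ≤ (a - x) * ∫_{(-∞,a)} ω ^ 2`, so `g * ψ ^ 2` is dominated by the
integrable function `(∫_{(-∞,a)} ω ^ 2) * (a - x) * g x`; integrating this pointwise bound gives the
estimate. Measurability of `ψ` comes from its continuity on `(-∞, a)`, where `ω` is locally
integrable.
-/

open MeasureTheory Set Real

section CauchySchwarz

variable {α : Type*} [MeasurableSpace α] {μ : Measure α}

theorem IntegrableOn.of_sq {f : α → ℝ} {s : Set α} (hs : μ s ≠ ⊤)
    (hf : AEStronglyMeasurable f (μ.restrict s)) (hsq : IntegrableOn (fun x => f x ^ 2) s μ) :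
    IntegrableOn f s μ :=
  have : IsFiniteMeasure (μ.restrict s) := isFiniteMeasure_restrict.2 hs
  ((memLp_two_iff_integrable_sq hf).2 hsq).integrable one_le_two

theorem sq_integral_le_measureReal_mul_integral_sq [IsFiniteMeasure μ] {f : α → ℝ}
    (hf : MemLp f 2 μ) : (∫ x, f x ∂μ) ^ 2 ≤ μ.real univ * ∫ x, f x ^ 2 ∂μ := by
  rcases eq_zero_or_neZero μ with rfl | _
  · simp
  have hm : 0 < μ.real univ := measureReal_univ_pos
  have hJensen := (even_two.convexOn_pow (𝕜 := ℝ)).map_average_le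
    (continuous_pow 2).continuousOn isClosed_univ (ae_of_all _ fun _ => mem_univ _)
    (hf.integrable one_le_two) hf.integrable_sq
  simp only [average_eq, smul_eq_mul] at hJensen
  calc (∫ x, f x ∂μ) ^ 2 = μ.real univ ^ 2 * ((μ.real univ)⁻¹ * ∫ x, f x ∂μ) ^ 2 := by
        field_simp
    _ ≤ μ.real univ ^ 2 * ((μ.real univ)⁻¹ * ∫ x, f x ^ 2 ∂μ) := by gcongr
    _ = μ.real univ * ∫ x, f x ^ 2 ∂μ := by field_simp

end CauchySchwarz

theorem sq_intervalIntegral_le {f : ℝ → ℝ} {a b : ℝ} (hab : a ≤ b)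
    (hf : MemLp f 2 (volume.restrict (Ioc a b))) :
    (∫ t in a..b, f t) ^ 2 ≤ (b - a) * ∫ t in Ioc a b, f t ^ 2 := by
  have : IsFiniteMeasure (volume.restrict (Ioc a b)) :=
    isFiniteMeasure_restrict.2 measure_Ioc_lt_top.ne
  simpa [intervalIntegral.integral_of_le hab, measureReal_restrict_apply_univ, hab]
    using sq_integral_le_measureReal_mul_integral_sq hf

theorem continuousOn_intervalIntegral_Iio {f : ℝ → ℝ} {a : ℝ}
    (hf : ∀ b < a, IntegrableOn f (Icc b a)) :
    ContinuousOn (fun x => ∫ t in x..a, f t) (Iio a) := by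
  intro x hx
  have hxa : x < a := hx
  have hIcc : ContinuousOn (fun y => ∫ t in y..a, f t) (Icc (x - 1) a) := by
    simpa only [uIcc_of_le (by linarith : x - 1 ≤ a)] using
      intervalIntegral.continuousOn_primitive_interval_left (a := x - 1) (b := a)
        (by simpa only [uIcc_of_le (by linarith : x - 1 ≤ a)] using hf (x - 1) (by linarith))
  exact (hIcc.continuousAt (Icc_mem_nhds (by linarith) hxa)).continuousWithinAt

theorem sq_intervalIntegral_le_mul_setIntegral_Iic {f : ℝ → ℝ} {x a : ℝ} (hxa : x ≤ a)
    (hf : AEStronglyMeasurable f volume) (hsq : IntegrableOn (fun t => f t ^ 2) (Iic a)) :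
    (∫ t in x..a, f t) ^ 2 ≤ (a - x) * ∫ t in Iic a, f t ^ 2 :=
  calc (∫ t in x..a, f t) ^ 2 ≤ (a - x) * ∫ t in Ioc x a, f t ^ 2 :=
        sq_intervalIntegral_le hxa
          ((memLp_two_iff_integrable_sq hf.restrict).2 (hsq.mono_set Ioc_subset_Iic_self))
    _ ≤ (a - x) * ∫ t in Iic a, f t ^ 2 :=
        mul_le_mul_of_nonneg_left
          (setIntegral_mono_set hsq (ae_of_all _ fun _ => sq_nonneg _)
            Ioc_subset_Iic_self.eventuallyLE)
          (sub_nonneg.2 hxa)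

/-- the weighted `L²` bound for the canonical primitive
`ψ x = -∫_x^a ω` of a square-integrable function `ω` on `(-∞, a)`, for a
nonnegative weight `g` with `∫_{(-∞,a)} (a - t) g t dt < ∞`. -/
theorem stmt_1 (a : ℝ) (ω g : ℝ → ℝ) (hω_meas : Measurable ω)
    (hω : IntegrableOn (fun t => ω t ^ 2) (Iio a))
    (hg_meas : Measurable g) (hg_nonneg : ∀ t, 0 ≤ g t)
    (hg : IntegrableOn (fun t => (a - t) * g t) (Iio a)) :
    IntegrableOn (fun x => g x * (-(∫ t in x..a, ω t)) ^ 2) (Iio a) ∧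
      ∫ x in Iio a, g x * (-(∫ t in x..a, ω t)) ^ 2 ≤
        (∫ t in Iio a, ω t ^ 2) * (∫ t in Iio a, (a - t) * g t) := by
  rw [← integral_Iic_eq_integral_Iio (f := fun t => ω t ^ 2)]
  rw [← integrableOn_Iic_iff_integrableOn_Iio] at hω
  set C := ∫ t in Iic a, ω t ^ 2
  have hbound (x : ℝ) (hx : x ∈ Iio a) :
      g x * (-(∫ t in x..a, ω t)) ^ 2 ≤ C * ((a - x) * g x) := by
    rw [neg_sq]
    calc g x * (∫ t in x..a, ω t) ^ 2 ≤ g x * ((a - x) * C) :=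
          mul_le_mul_of_nonneg_left (sq_intervalIntegral_le_mul_setIntegral_Iic (le_of_lt hx)
            hω_meas.aestronglyMeasurable hω) (hg_nonneg x)
      _ = C * ((a - x) * g x) := by ring
  have hψ : ContinuousOn (fun x => ∫ t in x..a, ω t) (Iio a) :=
    continuousOn_intervalIntegral_Iio fun b _ =>
      IntegrableOn.of_sq measure_Icc_lt_top.ne hω_meas.aestronglyMeasurable.restrict
        (hω.mono_set Icc_subset_Iic_self)
  have hmeas : AEStronglyMeasurable (fun x => g x * (-(∫ t in x..a, ω t)) ^ 2)
      (volume.restrict (Iio a)) :=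
    hg_meas.aestronglyMeasurable.mul ((hψ.aestronglyMeasurable measurableSet_Iio).neg.pow 2)
  have hint : IntegrableOn (fun x => g x * (-(∫ t in x..a, ω t)) ^ 2) (Iio a) :=
    (hg.const_mul C).mono' hmeas <| ae_restrict_of_forall_mem measurableSet_Iio fun x hx => by
      rw [norm_of_nonneg (mul_nonneg (hg_nonneg x) (sq_nonneg _))]
      exact hbound x hx
  refine ⟨hint, ?_⟩
  calc ∫ x in Iio a, g x * (-(∫ t in x..a, ω t)) ^ 2 ≤ ∫ x in Iio a, C * ((a - x) * g x) :=
        setIntegral_mono_on hint (hg.const_mul C) measurableSet_Iio hbound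
    _ = C * ∫ x in Iio a, (a - x) * g x := integral_const_mul C _
end

section
/- Let a ∈ ℝ, let g : ℝ → ℝ be measurable with g > 0 almost everywhere on (−∞,a), ∫_{(−∞,a)} g(t) dt < ∞ and ∫_{(−∞,a)} (a−t)·g(t) dt < ∞, and let ω : ℝ → ℝ be measurable with ∫_{(−∞,a)} ω(t)²/g(t) dt < ∞. Define ψ(x) := −∫_{(−∞,x]} ω(t) dt for x < a. Then ∫_{(−∞,a)} ψ(x)² dx ≤ (∫_{(−∞,a)} ω(t)²/g(t) dt) · (∫_{(−∞,a)} (a−t)·g(t) dt) < ∞. -/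
/-!
By Cauchy–Schwarz with weight `g`, `ψ(x)² ≤ (∫_{(-∞,x]} ω²/g) (∫_{(-∞,x]} g) ≤ (∫ ω²/g) G(x)`
with `G(x) = ∫_{(-∞,x]} g`, and by Fubini `∫_{(-∞,a)} G = ∫_{(-∞,a)} (a - t) g(t) dt`, since the
region `{t ≤ x < a}` has `x`-sections of length `a - t`.
-/

open MeasureTheory Set Real

section WeightedCauchySchwarz

variable {α : Type*} [MeasurableSpace α] {μ : Measure α} {f g : α → ℝ}

lemma abs_le_sq_div_add_div_two {x y : ℝ} (hy : 0 < y) : |x| ≤ (x ^ 2 / y + y) / 2 := by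
  have h : x ^ 2 / y + y - 2 * |x| = (|x| - y) ^ 2 / y := by
    field_simp
    rw [← sq_abs x]
    ring
  have : 0 ≤ (|x| - y) ^ 2 / y := by positivity
  linarith

lemma integrable_of_integrable_sq_div (hf : AEStronglyMeasurable f μ)
    (hg_pos : ∀ᵐ x ∂μ, 0 < g x) (hg : Integrable g μ)
    (hfg : Integrable (fun x => f x ^ 2 / g x) μ) : Integrable f μ :=
  ((hfg.add hg).div_const 2).mono' hf <| by
    filter_upwards [hg_pos] with x hx using abs_le_sq_div_add_div_two hx

lemma sq_integral_le_integral_sq_div_mul_integral (hf : AEStronglyMeasurable f μ)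
    (hg_pos : ∀ᵐ x ∂μ, 0 < g x) (hg : Integrable g μ)
    (hfg : Integrable (fun x => f x ^ 2 / g x) μ) :
    (∫ x, f x ∂μ) ^ 2 ≤ (∫ x, f x ^ 2 / g x ∂μ) * ∫ x, g x ∂μ := by
  have hf_int := integrable_of_integrable_sq_div hf hg_pos hg hfg
  -- `s ↦ ∫ (f - s g)² / g` is a nonnegative quadratic polynomial
  have hquad : ∀ s : ℝ, 0 ≤ (∫ x, g x ∂μ) * (s * s) + (-2 * ∫ x, f x ∂μ) * s +
      ∫ x, f x ^ 2 / g x ∂μ := by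
    intro s
    have hexpand : ∀ᵐ x ∂μ, (f x - s * g x) ^ 2 / g x =
        g x * (s * s) + -2 * f x * s + f x ^ 2 / g x := by
      filter_upwards [hg_pos] with x hx
      field_simp
      ring
    have hnonneg : 0 ≤ ∫ x, (f x - s * g x) ^ 2 / g x ∂μ :=
      integral_nonneg_of_ae <| by filter_upwards [hg_pos] with x hx using by positivity
    rwa [integral_congr_ae hexpand, integral_add _ hfg, integral_add, integral_mul_const,
      integral_mul_const, integral_const_mul] at hnonneg
    exacts [hg.mul_const _, (hf_int.const_mul _).mul_const _,
      (hg.mul_const _).add ((hf_int.const_mul _).mul_const _)]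
  have := discrim_le_zero hquad
  rw [discrim] at this
  nlinarith

end WeightedCauchySchwarz

lemma stronglyMeasurable_integral_Iic {E : Type*} [NormedAddCommGroup E] [NormedSpace ℝ E]
    {μ : Measure ℝ} [SFinite μ] {f : ℝ → E} (hf : StronglyMeasurable f) :
    StronglyMeasurable fun x => ∫ t in Iic x, f t ∂μ := by
  have hF : StronglyMeasurable ({p : ℝ × ℝ | p.2 ≤ p.1}.indicator fun p => f p.2) :=
    (hf.comp_measurable measurable_snd).indicator (measurableSet_le measurable_snd measurable_fst)
  convert hF.integral_prod_right' (ν := μ) using 2 with x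
  rw [← integral_indicator measurableSet_Iic]
  rfl

lemma integral_indicator_Ico_const (t a c : ℝ) :
    ∫ x, (Ico t a).indicator (fun _ => c) x = max (a - t) 0 * c := by
  rw [integral_indicator_const _ measurableSet_Ico, volume_real_Ico, smul_eq_mul]

lemma max_sub_zero_mul_eq_indicator (a : ℝ) (g : ℝ → ℝ) :
    (fun t => max (a - t) 0 * g t) = (Iio a).indicator fun t => (a - t) * g t := by
  funext t
  by_cases ht : t < a
  · simp [ht, ht.le]
  · simp [ht, not_lt.1 ht]

lemma integral_Iio_integral_Iic {a : ℝ} {g : ℝ → ℝ} (hg : Measurable g)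
    (hg_int : IntegrableOn (fun t => (a - t) * g t) (Iio a)) :
    IntegrableOn (fun x => ∫ t in Iic x, g t) (Iio a) ∧
      ∫ x in Iio a, ∫ t in Iic x, g t = ∫ t in Iio a, (a - t) * g t := by
  set F : ℝ × ℝ → ℝ := {p | p.2 ≤ p.1 ∧ p.1 < a}.indicator fun p => g p.2
  have hF_meas : Measurable F := (hg.comp measurable_snd).indicator <|
    (measurableSet_le measurable_snd measurable_fst).inter
      (measurableSet_lt measurable_fst measurable_const)
  have hsec_t : ∀ t, (fun x => F (x, t)) = (Ico t a).indicator fun _ => g t := fun t => rfl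
  have hsec_x : (fun x => ∫ t, F (x, t)) = (Iio a).indicator fun x => ∫ t in Iic x, g t := by
    funext x
    by_cases hx : x < a
    · rw [indicator_of_mem (mem_Iio.2 hx), ← integral_indicator measurableSet_Iic]
      congr 1 with t
      simp [F, indicator_apply, hx]
    · simp [F, hx]
  have hweight : Integrable fun t => max (a - t) 0 * g t := by
    rw [max_sub_zero_mul_eq_indicator]
    exact (integrable_indicator_iff measurableSet_Iio).2 hg_int
  have hF_int : Integrable F (volume.prod volume) := by
    refine (integrable_prod_iff' hF_meas.aestronglyMeasurable).2 ⟨ae_of_all _ fun t => ?_, ?_⟩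
    · rw [hsec_t, integrable_indicator_iff measurableSet_Ico]
      exact integrableOn_const (by simp)
    · refine hweight.norm.congr (ae_of_all _ fun t => ?_)
      have hnorm : ∀ x, ‖F (x, t)‖ = (Ico t a).indicator (fun _ => ‖g t‖) x := fun x =>
        norm_indicator_eq_indicator_norm (s := Ico t a) (fun _ => g t) x
      simp only [hnorm, integral_indicator_Ico_const, norm_mul, norm_of_nonneg (le_max_right _ _)]
  refine ⟨(integrable_indicator_iff measurableSet_Iio).1 (hsec_x ▸ hF_int.integral_prod_left), ?_⟩
  calc ∫ x in Iio a, ∫ t in Iic x, g t = ∫ x, ∫ t, F (x, t) := by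
        rw [hsec_x, integral_indicator measurableSet_Iio]
    _ = ∫ t, ∫ x, F (x, t) := integral_integral_swap (f := fun x t => F (x, t)) hF_int
    _ = ∫ t, max (a - t) 0 * g t := by simp only [hsec_t, integral_indicator_Ico_const]
    _ = ∫ t in Iio a, (a - t) * g t := by
        rw [max_sub_zero_mul_eq_indicator, integral_indicator measurableSet_Iio]

/-- `L²` bound for the canonical primitive `ψ x = -∫_{(-∞,x]} ω`
of a `(1,1)`-superform coefficient `ω` with finite `L²`-norm `∫ ω²/g` with
respect to a Kähler weight `g` on `(-∞, a)` satisfying `∫ g < ∞` and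
`∫ (a - t) g t dt < ∞`. -/
theorem stmt_3 (a : ℝ) (g ω : ℝ → ℝ) (hg_meas : Measurable g)
    (hg_pos : ∀ᵐ t ∂(volume.restrict (Iio a)), 0 < g t)
    (hg_int : IntegrableOn g (Iio a))
    (hg_int2 : IntegrableOn (fun t => (a - t) * g t) (Iio a))
    (hω_meas : Measurable ω)
    (hω : IntegrableOn (fun t => ω t ^ 2 / g t) (Iio a)) :
    IntegrableOn (fun x => (-(∫ t in Iic x, ω t)) ^ 2) (Iio a) ∧
      ∫ x in Iio a, (-(∫ t in Iic x, ω t)) ^ 2 ≤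
        (∫ t in Iio a, ω t ^ 2 / g t) * (∫ t in Iio a, (a - t) * g t) := by
  set A := ∫ t in Iio a, ω t ^ 2 / g t
  obtain ⟨hG_int, hG_eq⟩ := integral_Iio_integral_Iic hg_meas hg_int2
  have hbound : ∀ x ∈ Iio a, (-(∫ t in Iic x, ω t)) ^ 2 ≤ A * ∫ t in Iic x, g t := by
    intro x hx
    have hsub : Iic x ⊆ Iio a := Iic_subset_Iio.2 hx
    have hpos : ∀ᵐ t ∂(volume.restrict (Iic x)), 0 < g t :=
      ae_restrict_of_ae_restrict_of_subset hsub hg_pos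
    rw [neg_sq]
    refine (sq_integral_le_integral_sq_div_mul_integral hω_meas.aestronglyMeasurable hpos
      (hg_int.mono_set hsub) (hω.mono_set hsub)).trans ?_
    gcongr
    · exact integral_nonneg_of_ae (hpos.mono fun t ht => ht.le)
    · exact setIntegral_mono_set hω (by filter_upwards [hg_pos] with t ht using by positivity)
        hsub.eventuallyLE
  have hψ_meas : AEStronglyMeasurable (fun x => (-(∫ t in Iic x, ω t)) ^ 2)
      (volume.restrict (Iio a)) :=
    ((stronglyMeasurable_integral_Iic hω_meas.stronglyMeasurable).neg.pow 2).aestronglyMeasurable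
  have hψ_int : IntegrableOn (fun x => (-(∫ t in Iic x, ω t)) ^ 2) (Iio a) :=
    (hG_int.const_mul A).mono' hψ_meas <| (ae_restrict_iff' measurableSet_Iio).2 <|
      ae_of_all _ fun x hx => (norm_of_nonneg (sq_nonneg _)).trans_le (hbound x hx)
  refine ⟨hψ_int, ?_⟩
  calc ∫ x in Iio a, (-(∫ t in Iic x, ω t)) ^ 2 ≤ ∫ x in Iio a, A * ∫ t in Iic x, g t :=
        setIntegral_mono_on hψ_int (hG_int.const_mul A) measurableSet_Iio hbound
    _ = A * ∫ t in Iio a, (a - t) * g t := by rw [integral_const_mul, hG_eq]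
end

section
/- Let g : ℝ → ℝ be measurable with g > 0 almost everywhere on (−∞,0), ∫_{(−∞,0)} g(t) dt < ∞ and ∫_{(−∞,0)} t²·g(t) dt < ∞. Let ω : ℝ → ℝ be measurable with N² := ∫_{(−∞,0)} ω(t)²/g(t) dt < ∞, and let τ : ℝ → ℝ be measurable with M² := ∫_{(−∞,0)} τ(t)² dt < ∞. Define φ(x) := −∫_{(−∞,x]} ω(t) dt and ψ(x) := −∫_x^0 τ(t) dt for x < 0. Then for every x < 0, |φ(x)·ψ(x)| ≤ N·M·|x|^{−1/2}·(∫_{(−∞,x)} t²·g(t) dt)^{1/2}, and consequently φ(x)·ψ(x) → 0 as x → −∞. -/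
/-!
Both factors are controlled by Cauchy–Schwarz. On `(-∞, x]` write `ω = (ω / √g) · √g`, so that
`|φ x| ≤ N (∫_{(-∞,x]} g)^{1/2}`; there `t² ≥ x²`, hence `∫_{(-∞,x]} g ≤ x⁻² ∫_{(-∞,x)} t² g`.
On `[x, 0]` Cauchy–Schwarz against `1` gives `|ψ x| ≤ M |x|^{1/2}`. The product of the two bounds
is `N M |x|^{-1/2} (∫_{(-∞,x)} t² g)^{1/2} ≤ N M |x|^{-1/2} (∫_{(-∞,0)} t² g)^{1/2} → 0`.
-/

open MeasureTheory Set Real Filter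

section CauchySchwarz

variable {α : Type*} [MeasurableSpace α] {μ : Measure α}

theorem integral_mul_le_sqrt_mul_sqrt_of_nonneg {f h : α → ℝ} (hf0 : 0 ≤ᵐ[μ] f)
    (hh0 : 0 ≤ᵐ[μ] h) (hf : MemLp f 2 μ) (hh : MemLp h 2 μ) :
    ∫ t, f t * h t ∂μ ≤ √(∫ t, f t ^ 2 ∂μ) * √(∫ t, h t ^ 2 ∂μ) := by
  have two : ENNReal.ofReal 2 = 2 := ENNReal.ofReal_ofNat 2
  have := integral_mul_le_Lp_mul_Lq_of_nonneg Real.HolderConjugate.two_two hf0 hh0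
    (two ▸ hf) (two ▸ hh)
  simpa only [Real.rpow_two, ← Real.sqrt_eq_rpow] using this

theorem abs_integral_le_sqrt_integral_sq_div_mul_sqrt_integral {f w : α → ℝ}
    (hf : AEStronglyMeasurable f μ) (hw : AEStronglyMeasurable w μ)
    (hw_pos : ∀ᵐ t ∂μ, 0 < w t) (hfw : Integrable (fun t => f t ^ 2 / w t) μ)
    (hw_int : Integrable w μ) :
    |∫ t, f t ∂μ| ≤ √(∫ t, f t ^ 2 / w t ∂μ) * √(∫ t, w t ∂μ) := by
  have hsq_div : (fun t => (|f t| / √(w t)) ^ 2) =ᵐ[μ] fun t => f t ^ 2 / w t := by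
    filter_upwards [hw_pos] with t ht
    rw [div_pow, sq_abs, sq_sqrt ht.le]
  have hsq : (fun t => √(w t) ^ 2) =ᵐ[μ] w := by
    filter_upwards [hw_pos] with t ht
    exact sq_sqrt ht.le
  have hsplit : (fun t => |f t| / √(w t) * √(w t)) =ᵐ[μ] fun t => |f t| := by
    filter_upwards [hw_pos] with t ht
    exact div_mul_cancel₀ _ (sqrt_pos.mpr ht).ne'
  have hsqrt_meas : AEStronglyMeasurable (fun t => √(w t)) μ :=
    continuous_sqrt.comp_aestronglyMeasurable hw
  have hquot_meas : AEStronglyMeasurable (fun t => |f t| / √(w t)) μ :=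
    (continuous_abs.comp_aestronglyMeasurable hf).div₀ hsqrt_meas
  have hcs := integral_mul_le_sqrt_mul_sqrt_of_nonneg
    (Eventually.of_forall fun t => div_nonneg (abs_nonneg (f t)) (sqrt_nonneg (w t)))
    (Eventually.of_forall fun t => sqrt_nonneg (w t))
    ((memLp_two_iff_integrable_sq hquot_meas).mpr (hfw.congr hsq_div.symm))
    ((memLp_two_iff_integrable_sq hsqrt_meas).mpr (hw_int.congr hsq.symm))
  rw [integral_congr_ae hsplit, integral_congr_ae hsq_div, integral_congr_ae hsq] at hcs
  exact (abs_integral_le_integral_abs).trans hcs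

end CauchySchwarz

theorem le_inv_sq_mul_sq_mul {x t y : ℝ} (hx : x < 0) (ht : t ≤ x) (hy : 0 ≤ y) :
    y ≤ (x ^ 2)⁻¹ * (t ^ 2 * y) := by
  have hxt : x ^ 2 ≤ t ^ 2 := by nlinarith
  rw [inv_mul_eq_div, le_div_iff₀ (sq_pos_of_neg hx)]
  nlinarith [mul_le_mul_of_nonneg_right hxt hy]

section HalfLine

variable {g : ℝ → ℝ} {x : ℝ}

theorem integrableOn_Iic_of_integrableOn_sq_mul (hx : x < 0)
    (hg : AEStronglyMeasurable g (volume.restrict (Iic x)))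
    (hg0 : ∀ᵐ t ∂volume.restrict (Iic x), 0 ≤ g t)
    (h2 : IntegrableOn (fun t => t ^ 2 * g t) (Iic x)) : IntegrableOn g (Iic x) := by
  refine (h2.const_mul (x ^ 2)⁻¹).mono' hg ?_
  filter_upwards [hg0, ae_restrict_mem measurableSet_Iic] with t hgt ht
  rw [norm_of_nonneg hgt]
  exact le_inv_sq_mul_sq_mul hx ht hgt

theorem setIntegral_Iic_le_inv_sq_mul (hx : x < 0)
    (hg0 : ∀ᵐ t ∂volume.restrict (Iic x), 0 ≤ g t)
    (h2 : IntegrableOn (fun t => t ^ 2 * g t) (Iic x)) :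
    ∫ t in Iic x, g t ≤ (x ^ 2)⁻¹ * ∫ t in Iic x, t ^ 2 * g t := by
  rw [← integral_const_mul]
  refine integral_mono_of_nonneg hg0 (h2.const_mul _) ?_
  filter_upwards [hg0, ae_restrict_mem measurableSet_Iic] with t hgt ht
  exact le_inv_sq_mul_sq_mul hx ht hgt

theorem abs_setIntegral_Iic_le {ω : ℝ → ℝ} (hg_meas : Measurable g)
    (hg_pos : ∀ᵐ t ∂(volume.restrict (Iio (0:ℝ))), 0 < g t)
    (hg_int2 : IntegrableOn (fun t => t ^ 2 * g t) (Iio (0:ℝ)))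
    (hω_meas : Measurable ω) (hω : IntegrableOn (fun t => ω t ^ 2 / g t) (Iio (0:ℝ)))
    (hx : x < 0) :
    |∫ t in Iic x, ω t| ≤
      √(∫ t in Iio (0:ℝ), ω t ^ 2 / g t) * (|x|⁻¹ * √(∫ t in Iio x, t ^ 2 * g t)) := by
  have hsub : Iic x ⊆ Iio 0 := Iic_subset_Iio.mpr hx
  have hgx : ∀ᵐ t ∂volume.restrict (Iic x), 0 < g t :=
    ae_restrict_of_ae_restrict_of_subset hsub hg_pos
  have hg0 : ∀ᵐ t ∂volume.restrict (Iic x), 0 ≤ g t := hgx.mono fun t ht => ht.le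
  have hωg0 : 0 ≤ᵐ[volume.restrict (Iio 0)] fun t => ω t ^ 2 / g t := by
    filter_upwards [hg_pos] with t ht
    exact div_nonneg (sq_nonneg (ω t)) ht.le
  have h2 : IntegrableOn (fun t => t ^ 2 * g t) (Iic x) := hg_int2.mono_set hsub
  calc |∫ t in Iic x, ω t|
      ≤ √(∫ t in Iic x, ω t ^ 2 / g t) * √(∫ t in Iic x, g t) :=
        abs_integral_le_sqrt_integral_sq_div_mul_sqrt_integral hω_meas.aestronglyMeasurable
          hg_meas.aestronglyMeasurable hgx (hω.mono_set hsub)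
          (integrableOn_Iic_of_integrableOn_sq_mul hx hg_meas.aestronglyMeasurable hg0 h2)
    _ ≤ √(∫ t in Iio 0, ω t ^ 2 / g t) * √((x ^ 2)⁻¹ * ∫ t in Iic x, t ^ 2 * g t) := by
        refine mul_le_mul (sqrt_le_sqrt ?_) (sqrt_le_sqrt ?_) (sqrt_nonneg _) (sqrt_nonneg _)
        · exact setIntegral_mono_set hω hωg0 hsub.eventuallyLE
        · exact setIntegral_Iic_le_inv_sq_mul hx hg0 h2
    _ = √(∫ t in Iio 0, ω t ^ 2 / g t) * (|x|⁻¹ * √(∫ t in Iio x, t ^ 2 * g t)) := by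
        rw [sqrt_mul (by positivity), sqrt_inv, sqrt_sq_eq_abs,
          setIntegral_congr_set (Iio_ae_eq_Iic (a := x))]

end HalfLine

theorem abs_intervalIntegral_le_sqrt_mul_sqrt {τ : ℝ → ℝ} {x : ℝ} (hτ_meas : Measurable τ)
    (hτ : IntegrableOn (fun t => τ t ^ 2) (Iio (0:ℝ))) (hx : x ≤ 0) :
    |∫ t in x..0, τ t| ≤ √(∫ t in Iio (0:ℝ), τ t ^ 2) * √|x| := by
  have hsub : Ioo x 0 ⊆ Iio 0 := Ioo_subset_Iio_self
  have hcs := abs_integral_le_sqrt_integral_sq_div_mul_sqrt_integral (w := fun _ => (1 : ℝ))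
    (μ := volume.restrict (Ioo x 0)) hτ_meas.aestronglyMeasurable aestronglyMeasurable_const
    (Eventually.of_forall fun _ => one_pos) (by simp only [div_one]; exact hτ.mono_set hsub)
    (integrableOn_const measure_Ioo_lt_top.ne)
  simp only [div_one, setIntegral_const, volume_real_Ioo_of_le hx, smul_eq_mul, mul_one,
    zero_sub] at hcs
  rw [intervalIntegral.integral_of_le hx, integral_Ioc_eq_integral_Ioo, abs_of_nonpos hx]
  refine hcs.trans (mul_le_mul_of_nonneg_right (sqrt_le_sqrt ?_) (sqrt_nonneg _))
  exact setIntegral_mono_set hτ (Eventually.of_forall fun t => sq_nonneg (τ t))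
    hsub.eventuallyLE

theorem stmt_10_general (g ω τ : ℝ → ℝ) (hg_meas : Measurable g)
    (hg_pos : ∀ᵐ t ∂(volume.restrict (Iio (0:ℝ))), 0 < g t)
    (hg_int2 : IntegrableOn (fun t => t ^ 2 * g t) (Iio (0:ℝ)))
    (hω_meas : Measurable ω)
    (hω : IntegrableOn (fun t => ω t ^ 2 / g t) (Iio (0:ℝ)))
    (hτ_meas : Measurable τ)
    (hτ : IntegrableOn (fun t => τ t ^ 2) (Iio (0:ℝ))) :
    (∀ x < (0:ℝ),
      |(-(∫ t in Iic x, ω t)) * (-(∫ t in x..(0:ℝ), τ t))| ≤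
        Real.sqrt (∫ t in Iio (0:ℝ), ω t ^ 2 / g t) *
          Real.sqrt (∫ t in Iio (0:ℝ), τ t ^ 2) *
          (Real.sqrt |x|)⁻¹ * Real.sqrt (∫ t in Iio x, t ^ 2 * g t)) ∧
    Tendsto (fun x => (-(∫ t in Iic x, ω t)) * (-(∫ t in x..(0:ℝ), τ t)))
      atBot (nhds 0) := by
  have hbound : ∀ x < (0:ℝ), |(-(∫ t in Iic x, ω t)) * (-(∫ t in x..(0:ℝ), τ t))| ≤
      √(∫ t in Iio (0:ℝ), ω t ^ 2 / g t) * √(∫ t in Iio (0:ℝ), τ t ^ 2) *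
        (√|x|)⁻¹ * √(∫ t in Iio x, t ^ 2 * g t) := by
    intro x hx
    rw [abs_mul, abs_neg, abs_neg, ← one_div, ← sqrt_div_self']
    calc _ ≤ √(∫ t in Iio (0:ℝ), ω t ^ 2 / g t) * (|x|⁻¹ * √(∫ t in Iio x, t ^ 2 * g t)) *
            (√(∫ t in Iio (0:ℝ), τ t ^ 2) * √|x|) :=
          mul_le_mul (abs_setIntegral_Iic_le hg_meas hg_pos hg_int2 hω_meas hω hx)
            (abs_intervalIntegral_le_sqrt_mul_sqrt hτ_meas hτ hx.le) (abs_nonneg _)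
            (by positivity)
      _ = _ := by ring
  refine ⟨hbound, ?_⟩
  have ht2g0 : 0 ≤ᵐ[volume.restrict (Iio 0)] fun t => t ^ 2 * g t := by
    filter_upwards [hg_pos] with t ht
    exact mul_nonneg (sq_nonneg t) ht.le
  have hdecay : Tendsto (fun x : ℝ => (√|x|)⁻¹) atBot (nhds 0) :=
    tendsto_inv_atTop_zero.comp (tendsto_sqrt_atTop.comp tendsto_abs_atBot_atTop)
  refine squeeze_zero_norm' ?_ <| by
    simpa only [mul_zero, zero_mul] using (hdecay.const_mul (√(∫ t in Iio (0:ℝ), ω t ^ 2 / g t) *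
      √(∫ t in Iio (0:ℝ), τ t ^ 2))).mul_const √(∫ t in Iio (0:ℝ), t ^ 2 * g t)
  filter_upwards [eventually_lt_atBot 0] with x hx
  exact (hbound x hx).trans <| mul_le_mul_of_nonneg_left
    (sqrt_le_sqrt (setIntegral_mono_set hg_int2 ht2g0 (Iio_subset_Iio hx.le).eventuallyLE))
    (by positivity)

/-- boundary decay at the infinite end of an edge `[-∞,0]`:
for the canonical primitives `φ x = -∫_{(-∞,x]} ω` and `ψ x = -∫_x^0 τ`, with
`N = √(∫ ω²/g)` and `M = √(∫ τ²)`, one has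
`|φ x ψ x| ≤ N M |x|^{-1/2} (∫_{(-∞,x)} t² g)^{1/2}` for all `x < 0`, and
consequently `φ x ψ x → 0` as `x → -∞`. -/
theorem stmt_10 (g ω τ : ℝ → ℝ) (hg_meas : Measurable g)
    (hg_pos : ∀ᵐ t ∂(volume.restrict (Iio (0:ℝ))), 0 < g t)
    (hg_int : IntegrableOn g (Iio (0:ℝ)))
    (hg_int2 : IntegrableOn (fun t => t ^ 2 * g t) (Iio (0:ℝ)))
    (hω_meas : Measurable ω)
    (hω : IntegrableOn (fun t => ω t ^ 2 / g t) (Iio (0:ℝ)))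
    (hτ_meas : Measurable τ)
    (hτ : IntegrableOn (fun t => τ t ^ 2) (Iio (0:ℝ))) :
    (∀ x < (0:ℝ),
      |(-(∫ t in Iic x, ω t)) * (-(∫ t in x..(0:ℝ), τ t))| ≤
        Real.sqrt (∫ t in Iio (0:ℝ), ω t ^ 2 / g t) *
          Real.sqrt (∫ t in Iio (0:ℝ), τ t ^ 2) *
          (Real.sqrt |x|)⁻¹ * Real.sqrt (∫ t in Iio x, t ^ 2 * g t)) ∧
    Tendsto (fun x => (-(∫ t in Iic x, ω t)) * (-(∫ t in x..(0:ℝ), τ t)))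
      atBot (nhds 0) :=
  stmt_10_general g ω τ hg_meas hg_pos hg_int2 hω_meas hω hτ_meas hτ
end

section
/- Let g : ℝ → ℝ be measurable with g > 0 almost everywhere on (−∞,0), ∫_{(−∞,0)} g(t) dt < ∞ and ∫_{(−∞,0)} t²·g(t) dt < ∞. Let ω : ℝ → ℝ be measurable with ∫_{(−∞,0)} ω(t)²/g(t) dt < ∞, and let τ : ℝ → ℝ be measurable with ∫_{(−∞,0)} τ(t)² dt < ∞. Define φ(x) := −∫_{(−∞,x]} ω(t) dt and ψ(x) := −∫_x^0 τ(t) dt for x < 0. Then the functions ψ·ω and τ·φ are integrable on (−∞,0) and ∫_{(−∞,0)} ψ(t)·ω(t) dt = ∫_{(−∞,0)} τ(t)·φ(t) dt. -/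
open MeasureTheory Set Real

/-! Both sides are `-∫∫ τ(s) ω(t)` over the triangle `t < s < 0`, integrated in the two possible
orders, so Fubini gives the identity once the kernel is absolutely integrable. For that,
`∫_t^0 |τ| ≤ (‖τ‖₂² + |t|) / 2`, and the weighted AM-GM inequalities `|ω| ≤ (ω²/g + g) / 2` and
`|ω| |t| ≤ (ω²/g + t² g) / 2` dominate `|ω(t)| ∫_t^0 |τ|` by an integrable function. -/

theorem abs_mul_le_sq_div_add_sq_mul {w c g : ℝ} (hg : 0 < g) :
    |w| * c ≤ (w ^ 2 / g + c ^ 2 * g) / 2 := by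
  have h := two_mul_le_add_sq (|w|) (c * g)
  rw [sq_abs] at h
  rw [div_add' _ _ _ hg.ne', div_div, le_div_iff₀ (by positivity)]
  nlinarith

theorem integrable_of_integrable_sq {α : Type*} [MeasurableSpace α] {ν : Measure α}
    [IsFiniteMeasure ν] {f : α → ℝ} (hf : AEStronglyMeasurable f ν)
    (hf2 : Integrable (fun x => f x ^ 2) ν) : Integrable f ν :=
  ((memLp_two_iff_integrable_sq hf).2 hf2).integrable one_le_two

theorem integral_abs_le_of_integrable_sq {α : Type*} [MeasurableSpace α] {ν : Measure α}
    [IsFiniteMeasure ν] {f : α → ℝ} (hf : AEStronglyMeasurable f ν)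
    (hf2 : Integrable (fun x => f x ^ 2) ν) :
    ∫ x, |f x| ∂ν ≤ ((∫ x, f x ^ 2 ∂ν) + ν.real univ) / 2 := by
  calc ∫ x, |f x| ∂ν ≤ ∫ x, (f x ^ 2 + 1) / 2 ∂ν := by
        refine integral_mono (integrable_of_integrable_sq hf hf2).abs
          ((hf2.add (integrable_const 1)).div_const 2) fun x => ?_
        have := two_mul_le_add_sq (|f x|) 1
        rw [sq_abs] at this
        linarith
    _ = ((∫ x, f x ^ 2 ∂ν) + ν.real univ) / 2 := by
        rw [integral_div, integral_add hf2 (integrable_const 1), integral_const, smul_eq_mul,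
          mul_one]

theorem MeasureTheory.Measure.restrict_Iio_restrict_Ioi (μ : Measure ℝ) (a b : ℝ) :
    (μ.restrict (Iio b)).restrict (Ioi a) = μ.restrict (Ioo a b) := by
  rw [Measure.restrict_restrict measurableSet_Ioi, Ioi_inter_Iio]

theorem setIntegral_Ioi_restrict_Iio {f : ℝ → ℝ} {t b : ℝ} (ht : t ≤ b) :
    ∫ s in Ioi t, f s ∂(volume.restrict (Iio b)) = ∫ s in t..b, f s := by
  rw [Measure.restrict_Iio_restrict_Ioi, intervalIntegral.integral_of_le ht,
    integral_Ioc_eq_integral_Ioo]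

theorem setIntegral_Iio_restrict_Iio {f : ℝ → ℝ} {s b : ℝ} (hs : s ≤ b) :
    ∫ t in Iio s, f t ∂(volume.restrict (Iio b)) = ∫ t in Iic s, f t := by
  rw [Measure.restrict_restrict_of_subset (Iio_subset_Iio hs), setIntegral_congr_set Iio_ae_eq_Iic]

theorem setIntegral_Ioo_abs_le {f : ℝ → ℝ} (hf_meas : Measurable f)
    {b : ℝ} (hf : IntegrableOn (fun s => f s ^ 2) (Iio b)) {t : ℝ} (ht : t < b) :
    ∫ s in Ioo t b, |f s| ≤ ((∫ s in Iio b, f s ^ 2) + (b - t)) / 2 := by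
  have hf_Ioo : IntegrableOn (fun s => f s ^ 2) (Ioo t b) := hf.mono_set Ioo_subset_Iio_self
  have hsq : ∫ s in Ioo t b, f s ^ 2 ≤ ∫ s in Iio b, f s ^ 2 :=
    setIntegral_mono_set hf (Filter.Eventually.of_forall fun s => sq_nonneg (f s))
      Ioo_subset_Iio_self.eventuallyLE
  have hvol : (volume.restrict (Ioo t b)).real univ = b - t := by
    rw [measureReal_restrict_apply_univ, Real.volume_real_Ioo_of_le ht.le]
  have := integral_abs_le_of_integrable_sq hf_meas.aestronglyMeasurable hf_Ioo
  rw [hvol] at this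
  linarith

noncomputable def triangleKernel (f g : ℝ → ℝ) : ℝ × ℝ → ℝ :=
  {q | q.1 < q.2}.indicator fun q => f q.2 * g q.1

section triangleKernel

variable {μ : Measure ℝ} {f g : ℝ → ℝ}

theorem measurable_triangleKernel (hf : Measurable f) (hg : Measurable g) :
    Measurable (triangleKernel f g) :=
  ((hf.comp measurable_snd).mul (hg.comp measurable_fst)).indicator
    (measurableSet_lt measurable_fst measurable_snd)

theorem triangleKernel_eq_indicator_Ioi (t : ℝ) :
    (fun s => triangleKernel f g (t, s)) = (Ioi t).indicator fun s => f s * g t :=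
  rfl

theorem triangleKernel_eq_indicator_Iio (s : ℝ) :
    (fun t => triangleKernel f g (t, s)) = (Iio s).indicator fun t => f s * g t :=
  rfl

theorem integral_triangleKernel_left (t : ℝ) :
    ∫ s, triangleKernel f g (t, s) ∂μ = (∫ s in Ioi t, f s ∂μ) * g t := by
  rw [triangleKernel_eq_indicator_Ioi, integral_indicator measurableSet_Ioi, integral_mul_const]

theorem integral_triangleKernel_right (s : ℝ) :
    ∫ t, triangleKernel f g (t, s) ∂μ = f s * ∫ t in Iio s, g t ∂μ := by
  rw [triangleKernel_eq_indicator_Iio, integral_indicator measurableSet_Iio, integral_const_mul]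

theorem integral_norm_triangleKernel_left (t : ℝ) :
    ∫ s, ‖triangleKernel f g (t, s)‖ ∂μ = |g t| * ∫ s in Ioi t, |f s| ∂μ := by
  have hnorm :
      (fun s => ‖triangleKernel f g (t, s)‖) = (Ioi t).indicator fun s => |g t| * |f s| := by
    ext s
    change ‖(Ioi t).indicator (fun s => f s * g t) s‖ = _
    simp only [norm_indicator_eq_indicator_norm, norm_mul, Real.norm_eq_abs, mul_comm]
  rw [hnorm, integral_indicator measurableSet_Ioi, integral_const_mul]

theorem integrable_triangleKernel [SFinite μ] (hf : Measurable f) (hg : Measurable g)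
    (hf_loc : ∀ᵐ t ∂μ, IntegrableOn f (Ioi t) μ) {M : ℝ → ℝ} (hM : Integrable M μ)
    (hbound : ∀ᵐ t ∂μ, |g t| * ∫ s in Ioi t, |f s| ∂μ ≤ M t) :
    Integrable (triangleKernel f g) (μ.prod μ) := by
  have hK := measurable_triangleKernel hf hg
  refine (integrable_prod_iff hK.aestronglyMeasurable).2 ⟨?_, ?_⟩
  · filter_upwards [hf_loc] with t ht
    rw [triangleKernel_eq_indicator_Ioi, integrable_indicator_iff measurableSet_Ioi]
    exact ht.mul_const (g t)
  · refine hM.mono' hK.norm.stronglyMeasurable.integral_prod_right'.aestronglyMeasurable ?_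
    filter_upwards [hbound] with t ht
    rw [integral_norm_triangleKernel_left,
      Real.norm_of_nonneg (mul_nonneg (abs_nonneg _) (integral_nonneg fun _ => abs_nonneg _))]
    exact ht

theorem integrable_and_integral_Ioi_mul_eq_integral_mul_Iio [SFinite μ]
    (hK : Integrable (triangleKernel f g) (μ.prod μ)) :
    Integrable (fun t => (∫ s in Ioi t, f s ∂μ) * g t) μ ∧
      Integrable (fun s => f s * ∫ t in Iio s, g t ∂μ) μ ∧
      ∫ t, (∫ s in Ioi t, f s ∂μ) * g t ∂μ = ∫ s, f s * ∫ t in Iio s, g t ∂μ ∂μ := by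
  simp_rw [← integral_triangleKernel_left, ← integral_triangleKernel_right]
  exact ⟨hK.integral_prod_left, hK.integral_prod_right, integral_integral_swap hK⟩

end triangleKernel

theorem integrable_triangleKernel_of_sq_div_integrable {g ω τ : ℝ → ℝ}
    (hg_pos : ∀ᵐ t ∂(volume.restrict (Iio (0:ℝ))), 0 < g t)
    (hg_int : IntegrableOn g (Iio (0:ℝ)))
    (hg_int2 : IntegrableOn (fun t => t ^ 2 * g t) (Iio (0:ℝ)))
    (hω_meas : Measurable ω) (hω : IntegrableOn (fun t => ω t ^ 2 / g t) (Iio (0:ℝ)))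
    (hτ_meas : Measurable τ) (hτ : IntegrableOn (fun t => τ t ^ 2) (Iio (0:ℝ))) :
    Integrable (triangleKernel τ ω)
      ((volume.restrict (Iio (0:ℝ))).prod (volume.restrict (Iio (0:ℝ)))) := by
  set T := ∫ s in Iio (0:ℝ), τ s ^ 2
  have hT : 0 ≤ T := setIntegral_nonneg measurableSet_Iio fun s _ => sq_nonneg (τ s)
  set M := fun t => (T * ((ω t ^ 2 / g t + g t) / 2) + (ω t ^ 2 / g t + t ^ 2 * g t) / 2) / 2
  have hM : IntegrableOn M (Iio 0) :=
    ((((hω.add hg_int).div_const 2).const_mul T).add ((hω.add hg_int2).div_const 2)).div_const 2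
  refine integrable_triangleKernel hτ_meas hω_meas ?_ hM ?_
  · filter_upwards with t
    rw [IntegrableOn, Measure.restrict_Iio_restrict_Ioi]
    exact integrable_of_integrable_sq hτ_meas.aestronglyMeasurable
      (hτ.mono_set Ioo_subset_Iio_self)
  · filter_upwards [hg_pos, ae_restrict_mem measurableSet_Iio] with t hgt ht
    rw [Measure.restrict_Iio_restrict_Ioi]
    have hω_le := abs_mul_le_sq_div_add_sq_mul (w := ω t) (c := 1) hgt
    have hωt_le := abs_mul_le_sq_div_add_sq_mul (w := ω t) (c := -t) hgt
    rw [one_pow, one_mul, mul_one] at hω_le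
    rw [neg_sq] at hωt_le
    calc |ω t| * ∫ s in Ioo t 0, |τ s| ≤ |ω t| * ((T + (0 - t)) / 2) :=
          mul_le_mul_of_nonneg_left (setIntegral_Ioo_abs_le hτ_meas hτ ht) (abs_nonneg _)
      _ ≤ M t := by simp only [M]; linarith [mul_le_mul_of_nonneg_left hω_le hT]

theorem stmt_11_general (g ω τ : ℝ → ℝ)
    (hg_pos : ∀ᵐ t ∂(volume.restrict (Iio (0:ℝ))), 0 < g t)
    (hg_int : IntegrableOn g (Iio (0:ℝ)))
    (hg_int2 : IntegrableOn (fun t => t ^ 2 * g t) (Iio (0:ℝ)))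
    (hω_meas : Measurable ω)
    (hω : IntegrableOn (fun t => ω t ^ 2 / g t) (Iio (0:ℝ)))
    (hτ_meas : Measurable τ)
    (hτ : IntegrableOn (fun t => τ t ^ 2) (Iio (0:ℝ))) :
    IntegrableOn (fun t => (-(∫ s in t..(0:ℝ), τ s)) * ω t) (Iio (0:ℝ)) ∧
    IntegrableOn (fun t => τ t * (-(∫ s in Iic t, ω s))) (Iio (0:ℝ)) ∧
    ∫ t in Iio (0:ℝ), (-(∫ s in t..(0:ℝ), τ s)) * ω t =
      ∫ t in Iio (0:ℝ), τ t * (-(∫ s in Iic t, ω s)) := by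
  obtain ⟨hψω, hτφ, hswap⟩ := integrable_and_integral_Ioi_mul_eq_integral_mul_Iio
    (integrable_triangleKernel_of_sq_div_integrable hg_pos hg_int hg_int2 hω_meas hω hτ_meas hτ)
  have hψ : (fun t => (-(∫ s in t..0, τ s)) * ω t) =ᵐ[volume.restrict (Iio 0)]
      fun t => -((∫ s in Ioi t, τ s ∂(volume.restrict (Iio 0))) * ω t) := by
    filter_upwards [ae_restrict_mem measurableSet_Iio] with t ht
    rw [setIntegral_Ioi_restrict_Iio (le_of_lt ht), neg_mul]
  have hφ : (fun s => τ s * (-(∫ t in Iic s, ω t))) =ᵐ[volume.restrict (Iio 0)]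
      fun s => -(τ s * ∫ t in Iio s, ω t ∂(volume.restrict (Iio 0))) := by
    filter_upwards [ae_restrict_mem measurableSet_Iio] with s hs
    rw [setIntegral_Iio_restrict_Iio (le_of_lt hs), mul_neg]
  refine ⟨hψω.neg.congr hψ.symm, hτφ.neg.congr hφ.symm, ?_⟩
  rw [integral_congr_ae hψ, integral_congr_ae hφ, integral_neg, integral_neg, hswap]

/-- integration by parts without boundary terms on the infinite
edge `[-∞,0]`: with `φ x = -∫_{(-∞,x]} ω` and `ψ x = -∫_x^0 τ`, the functions
`ψ·ω` and `τ·φ` are integrable on `(-∞,0)` and `∫ ψ ω = ∫ τ φ`. -/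
theorem stmt_11 (g ω τ : ℝ → ℝ) (hg_meas : Measurable g)
    (hg_pos : ∀ᵐ t ∂(volume.restrict (Iio (0:ℝ))), 0 < g t)
    (hg_int : IntegrableOn g (Iio (0:ℝ)))
    (hg_int2 : IntegrableOn (fun t => t ^ 2 * g t) (Iio (0:ℝ)))
    (hω_meas : Measurable ω)
    (hω : IntegrableOn (fun t => ω t ^ 2 / g t) (Iio (0:ℝ)))
    (hτ_meas : Measurable τ)
    (hτ : IntegrableOn (fun t => τ t ^ 2) (Iio (0:ℝ))) :
    IntegrableOn (fun t => (-(∫ s in t..(0:ℝ), τ s)) * ω t) (Iio (0:ℝ)) ∧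
    IntegrableOn (fun t => τ t * (-(∫ s in Iic t, ω s))) (Iio (0:ℝ)) ∧
    ∫ t in Iio (0:ℝ), (-(∫ s in t..(0:ℝ), τ s)) * ω t =
      ∫ t in Iio (0:ℝ), τ t * (-(∫ s in Iic t, ω s)) :=
  stmt_11_general g ω τ hg_pos hg_int hg_int2 hω_meas hω hτ_meas hτ
end
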